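/- arXiv:2601.08678 — 2 statements merged into one kernel-verified Lean document; each statement's English description precedes it below -/
import Mathlib

section
/- Let D = (P,𝓑) be a symmetric 2-(v,k,λ) design with λ > 1 and let G be a block-transitive automorphism group of D. Suppose that for every block B, every element of G_B that induces a non-identity permutation of B fixes at most one point of B. If H is a subgroup of G that fixes at least two points of P, then the order |H| divides λ. -/
/-!
The subgroup `H` permutes the `λ` blocks through `x` and `y`, and it does so freely, so `|H|`
divides `λ`. Freeness: an element of `H` stabilising such a block fixes two of its points, hence,
by the hypothesis on `G`, the whole block. An automorphism `g` fixing a block `B` pointwise is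
trivial: distinct blocks of a symmetric design meet in exactly `λ ≥ 2` points, and a block `D`
through a point `z` moved by `g` and through `g z` would either be fixed by `g` (and then fixed
pointwise, as it meets `B` in `λ` points) or meet `g D` in more than `λ` points.
-/

open scoped Pointwise

/-- A group action is primitive if it is transitive and every block is trivial
(this is the usual notion of a primitive permutation group). -/
def IsPrimitiveAction (G X : Type*) [Group G] [MulAction G X] : Prop :=
  MulAction.IsPretransitive G X ∧
    ∀ B : Set X, MulAction.IsBlock G B → B.Subsingleton ∨ B = Set.univ

variable {P : Type*} [Fintype P] [DecidableEq P]

/-- `𝓑` is the block set of a (non-trivial) 2-design with parameters `(v, k, lam)`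
on the point set `P`. -/
structure IsDesign (𝓑 : Finset (Finset P)) (v k lam : ℕ) : Prop where
  card_points : Fintype.card P = v
  blocks_card : ∀ B ∈ 𝓑, B.card = k
  two_lt_k : 2 < k
  k_lt_v : k < v - 1
  lam_pos : 0 < lam
  pair_blocks : ∀ x y : P, x ≠ y → (𝓑.filter fun B => x ∈ B ∧ y ∈ B).card = lam

/-- `G` is an automorphism group of the design with block set `𝓑`:
every element of `G` maps blocks to blocks. -/
def IsAutGroup (G : Subgroup (Equiv.Perm P)) (𝓑 : Finset (Finset P)) : Prop :=
  ∀ g ∈ G, ∀ B ∈ 𝓑, g • B ∈ 𝓑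

/-- `G` acts transitively on the flags of the design with block set `𝓑`. -/
def IsFlagTransitive (G : Subgroup (Equiv.Perm P)) (𝓑 : Finset (Finset P)) : Prop :=
  ∀ B₁ ∈ 𝓑, ∀ B₂ ∈ 𝓑, ∀ x₁ ∈ B₁, ∀ x₂ ∈ B₂, ∃ g ∈ G, g • x₁ = x₂ ∧ g • B₁ = B₂

/-- `G` acts transitively on the blocks of the design with block set `𝓑`. -/
def IsBlockTransitive (G : Subgroup (Equiv.Perm P)) (𝓑 : Finset (Finset P)) : Prop :=
  ∀ B₁ ∈ 𝓑, ∀ B₂ ∈ 𝓑, ∃ g ∈ G, g • B₁ = B₂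

open Finset

theorem MulAction.card_dvd_card_of_free {K α : Type*} [Group K] [MulAction K α] (s : Finset α)
    (hs : ∀ g : K, ∀ a ∈ s, g • a ∈ s) (hfree : ∀ g : K, ∀ a ∈ s, g • a = a → g = 1) :
    Nat.card K ∣ #s := by
  let T : SubMulAction K α := ⟨s, fun g _ ha => hs g _ ha⟩
  have hstab : ∀ b : T, stabilizer K b = ⊥ := fun b =>
    (Subgroup.eq_bot_iff_forall _).mpr fun g hg =>
      hfree g b b.2 (congrArg Subtype.val (mem_stabilizer_iff.mp hg))
  have hT : Nat.card T = #s :=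
    (Nat.card_coe_set_eq (s : Set α)).trans (Set.ncard_coe_finset s)
  rw [← hT, Nat.card_congr (selfEquivOrbitsQuotientProd hstab), Nat.card_prod]
  exact dvd_mul_left _ _

namespace IsDesign

variable {𝓑 : Finset (Finset P)} {v k lam : ℕ}

theorem card_filter_mem_mul (hD : IsDesign 𝓑 v k lam) (p : P) :
    #{C ∈ 𝓑 | p ∈ C} * (k - 1) = lam * (v - 1) := by
  have hpairs : ∀ q ∈ univ.erase p, #{C ∈ {C ∈ 𝓑 | p ∈ C} | q ∈ C} = lam := fun q hq => by
    rw [filter_filter]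
    exact hD.pair_blocks p q (ne_of_mem_erase hq).symm
  have hsum := sum_card_inter hpairs
  rw [card_erase_of_mem (mem_univ p), card_univ, hD.card_points] at hsum
  rw [mul_comm lam, ← hsum, eq_comm]
  refine sum_const_nat fun C hC => ?_
  obtain ⟨hC, hpC⟩ := mem_filter.mp hC
  rw [erase_inter, univ_inter, card_erase_of_mem hpC, hD.blocks_card C hC]

theorem card_filter_mem_eq (hD : IsDesign 𝓑 v k lam) (hsym : #𝓑 = v) (p : P) :
    #{C ∈ 𝓑 | p ∈ C} = k := by
  have hk : 0 < k - 1 := by have := hD.two_lt_k; omega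
  have hconst : ∀ q, #{C ∈ 𝓑 | q ∈ C} = #{C ∈ 𝓑 | p ∈ C} := fun q =>
    Nat.eq_of_mul_eq_mul_right hk
      ((hD.card_filter_mem_mul q).trans (hD.card_filter_mem_mul p).symm)
  have hsum := sum_card hconst
  rw [sum_congr rfl hD.blocks_card, sum_const, smul_eq_mul, hsym, hD.card_points] at hsum
  have hv : 0 < v := by have := hD.k_lt_v; omega
  exact (Nat.eq_of_mul_eq_mul_left hv hsum).symm

theorem lam_mul_eq [Nonempty P] (hD : IsDesign 𝓑 v k lam) (hsym : #𝓑 = v) :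
    lam * (v - 1) = k * (k - 1) := by
  inhabit P
  rw [← hD.card_filter_mem_mul default, hD.card_filter_mem_eq hsym]

theorem sum_card_inter (hD : IsDesign 𝓑 v k lam) (hsym : #𝓑 = v) (B : Finset P) :
    ∑ C ∈ 𝓑, #(B ∩ C) = #B * k :=
  Finset.sum_card_inter fun p _ => hD.card_filter_mem_eq hsym p

theorem sum_card_offDiag_inter (hD : IsDesign 𝓑 v k lam) (B : Finset P) :
    ∑ C ∈ 𝓑, #(B ∩ C).offDiag = #B.offDiag * lam := by
  have hdc := sum_card_bipartiteAbove_eq_sum_card_bipartiteBelow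
    (s := 𝓑) (t := B.offDiag) (fun C pq => pq ∈ C.offDiag)
  simp only [bipartiteAbove, bipartiteBelow, filter_mem_eq_inter] at hdc
  rw [← sum_const_nat fun pq hpq => ?_]
  · simpa only [offDiag_inter] using hdc
  obtain ⟨-, -, hpq⟩ := mem_offDiag.mp hpq
  simpa only [mem_offDiag, hpq, ne_eq, not_false_eq_true, and_true] using
    hD.pair_blocks _ _ hpq

theorem card_inter_eq (hD : IsDesign 𝓑 v k lam) (hsym : #𝓑 = v) {B C : Finset P} (hB : B ∈ 𝓑)
    (hC : C ∈ 𝓑) (hBC : B ≠ C) :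
    #(B ∩ C) = lam := by
  have hk := hD.two_lt_k
  have : Nonempty P := ⟨(card_pos.mp (by rw [hD.blocks_card B hB]; omega)).choose⟩
  have hv : 1 ≤ v := by have := hD.k_lt_v; omega
  have hfisher : (lam : ℤ) * (v - 1) = k * (k - 1) := by
    have := hD.lam_mul_eq hsym
    zify [hv, (by omega : 1 ≤ k)] at this
    exact this
  have hsum : ∑ C ∈ 𝓑, (#(B ∩ C) : ℤ) = k * k := by
    exact_mod_cast (hD.sum_card_inter hsym B).trans (by rw [hD.blocks_card B hB])
  have hpairs : ∑ C ∈ 𝓑, ((#(B ∩ C) : ℤ) * #(B ∩ C) - #(B ∩ C)) = (k * k - k) * lam := by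
    have cast_offDiag : ∀ s : Finset P, (#s.offDiag : ℤ) = #s * #s - #s := fun s => by
      rw [offDiag_card, Nat.cast_sub (Nat.le_mul_self _), Nat.cast_mul]
    have := congrArg (Nat.cast (R := ℤ)) (hD.sum_card_offDiag_inter B)
    simpa only [Nat.cast_sum, Nat.cast_mul, cast_offDiag, hD.blocks_card B hB] using this
  -- Variance argument: the squared deviations of `|B ∩ C|` from `λ` over all blocks `C` sum to
  -- the deviation at `C = B` alone.
  set f : Finset P → ℤ := fun C => ((#(B ∩ C) : ℤ) - lam) ^ 2 with hf
  have htotal : ∑ C ∈ 𝓑, f C = f B := by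
    have hexpand : ∀ C ∈ 𝓑, f C = ((#(B ∩ C) : ℤ) * #(B ∩ C) - #(B ∩ C))
        + (1 - 2 * lam) * #(B ∩ C) + lam ^ 2 := fun C _ => by ring
    rw [sum_congr rfl hexpand, sum_add_distrib, sum_add_distrib, ← mul_sum, sum_const, hpairs,
      hsum, hsym, nsmul_eq_mul]
    simp only [hf, inter_self, hD.blocks_card B hB]
    linear_combination lam * hfisher
  have hzero : ∑ C ∈ 𝓑.erase B, f C = 0 := by
    have := add_sum_erase 𝓑 f hB
    omega
  have hC0 := (sum_eq_zero_iff_of_nonneg fun C _ => sq_nonneg _).mp hzero C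
    (mem_erase.mpr ⟨hBC.symm, hC⟩)
  exact_mod_cast sub_eq_zero.mp (pow_eq_zero_iff two_ne_zero |>.mp hC0)

variable {g : Equiv.Perm P}

theorem forall_smul_eq_of_two_le_card_fixed
    (hg : ∀ C ∈ 𝓑, g • C = C → ¬ (∀ a ∈ C, g • a = a) → #{a ∈ C | g • a = a} ≤ 1)
    {C : Finset P} (hC : C ∈ 𝓑) (hgC : g • C = C) (h2 : 2 ≤ #{a ∈ C | g • a = a}) :
    ∀ a ∈ C, g • a = a := by
  by_contra hne
  have := hg C hC hgC hne
  omega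

theorem eq_one_of_forall_smul_eq (hD : IsDesign 𝓑 v k lam) (hsym : #𝓑 = v) (hlam : 1 < lam)
    (hgAut : ∀ C ∈ 𝓑, g • C ∈ 𝓑)
    (hg : ∀ C ∈ 𝓑, g • C = C → ¬ (∀ a ∈ C, g • a = a) → #{a ∈ C | g • a = a} ≤ 1)
    {B : Finset P} (hB : B ∈ 𝓑) (hgB : ∀ a ∈ B, g • a = a) : g = 1 := by
  ext z
  by_contra hz
  change g • z ≠ z at hz
  have hgzB : g • z ∉ B := fun h => hz (smul_left_cancel g (hgB _ h))
  obtain ⟨D, hDmem⟩ := card_pos.mp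
    ((hD.pair_blocks z (g • z) (Ne.symm hz)).symm ▸ hD.lam_pos)
  obtain ⟨hD𝓑, hzD, hgzD⟩ := mem_filter.mp hDmem
  have hBD : #(B ∩ D) = lam :=
    hD.card_inter_eq hsym hB hD𝓑 (by rintro rfl; exact hz (hgB z hzD))
  by_cases hgD : g • D = D
  · -- `g` fixes the `λ ≥ 2` points of `B ∩ D`, hence all of `D`, including `z`.
    have hfixed : B ∩ D ⊆ {a ∈ D | g • a = a} := fun a ha =>
      mem_filter.mpr ⟨(mem_inter.mp ha).2, hgB a (mem_inter.mp ha).1⟩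
    have h2 := hBD ▸ card_le_card hfixed
    exact hz (forall_smul_eq_of_two_le_card_fixed hg hD𝓑 hgD (by omega) z hzD)
  · -- `D ∩ g • D` has more than `λ` points: those of `B ∩ D`, and `g • z ∉ B`.
    have hsub : insert (g • z) (B ∩ D) ⊆ D ∩ g • D := by
      intro a ha
      rcases mem_insert.mp ha with rfl | ha
      · exact mem_inter.mpr ⟨hgzD, smul_mem_smul_finset hzD⟩
      · obtain ⟨haB, haD⟩ := mem_inter.mp ha
        exact mem_inter.mpr ⟨haD, hgB a haB ▸ smul_mem_smul_finset haD⟩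
    have hle := card_le_card hsub
    rw [card_insert_of_notMem (fun h => hgzB (mem_inter.mp h).1), hBD,
      hD.card_inter_eq hsym hD𝓑 (hgAut D hD𝓑) (Ne.symm hgD)] at hle
    omega

theorem eq_one_of_smul_eq_of_two_fixed (hD : IsDesign 𝓑 v k lam) (hsym : #𝓑 = v)
    (hlam : 1 < lam) (hgAut : ∀ C ∈ 𝓑, g • C ∈ 𝓑)
    (hg : ∀ C ∈ 𝓑, g • C = C → ¬ (∀ a ∈ C, g • a = a) → #{a ∈ C | g • a = a} ≤ 1)
    {B : Finset P} (hB : B ∈ 𝓑) (hgB : g • B = B) {x y : P} (hxy : x ≠ y) (hxB : x ∈ B)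
    (hyB : y ∈ B) (hgx : g • x = x) (hgy : g • y = y) : g = 1 := by
  have hfixed : {x, y} ⊆ {a ∈ B | g • a = a} := by
    simp only [insert_subset_iff, singleton_subset_iff, mem_filter]
    exact ⟨⟨hxB, hgx⟩, hyB, hgy⟩
  have h2 := card_pair hxy ▸ card_le_card hfixed
  exact hD.eq_one_of_forall_smul_eq hsym hlam hgAut hg hB
    (forall_smul_eq_of_two_le_card_fixed hg hB hgB h2)

end IsDesign

theorem stmt_9_general (𝓑 : Finset (Finset P)) (v k lam : ℕ)
    (hD : IsDesign 𝓑 v k lam) (hsym : 𝓑.card = v) (hlam : 1 < lam)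
    (G : Subgroup (Equiv.Perm P)) (hAut : IsAutGroup G 𝓑)
    (hfix : ∀ B ∈ 𝓑, ∀ g : G, g • B = B → ¬ (∀ a ∈ B, g • a = a) →
      (B.filter fun a => g • a = a).card ≤ 1)
    (H : Subgroup G) (x y : P) (hxy : x ≠ y)
    (hx : ∀ h ∈ H, h • x = x) (hy : ∀ h ∈ H, h • y = y) :
    Nat.card H ∣ lam := by
  rw [← hD.pair_blocks x y hxy]
  refine MulAction.card_dvd_card_of_free _ (fun h B hB => ?_) (fun h B hB hhB => ?_)
  · obtain ⟨hB, hxB, hyB⟩ := mem_filter.mp hB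
    exact mem_filter.mpr ⟨hAut _ (h : G).2 B hB, hx h h.2 ▸ smul_mem_smul_finset hxB,
      hy h h.2 ▸ smul_mem_smul_finset hyB⟩
  · obtain ⟨hB, hxB, hyB⟩ := mem_filter.mp hB
    exact Subtype.ext <| Subtype.ext <| hD.eq_one_of_smul_eq_of_two_fixed hsym hlam
      (hAut _ (h : G).2) (fun C hC => hfix C hC h) hB hhB hxy hxB hyB (hx h h.2) (hy h h.2)

/-- **Lemma 4.4.** Let `G` be a block-transitive automorphism group of a symmetric design
with `λ > 1` such that for every block `B` every element of `G_B` inducing a non-identity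
permutation of `B` fixes at most one point of `B`. If a subgroup `H` of `G` fixes at
least two points, then `|H|` divides `λ`. -/
theorem stmt_9 (𝓑 : Finset (Finset P)) (v k lam : ℕ)
    (hD : IsDesign 𝓑 v k lam) (hsym : 𝓑.card = v) (hlam : 1 < lam)
    (G : Subgroup (Equiv.Perm P)) (hAut : IsAutGroup G 𝓑)
    (hbt : IsBlockTransitive G 𝓑)
    (hfix : ∀ B ∈ 𝓑, ∀ g : G, g • B = B → ¬ (∀ a ∈ B, g • a = a) →
      (B.filter fun a => g • a = a).card ≤ 1)
    (H : Subgroup G) (x y : P) (hxy : x ≠ y)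
    (hx : ∀ h ∈ H, h • x = x) (hy : ∀ h ∈ H, h • y = y) :
    Nat.card H ∣ lam :=
  stmt_9_general 𝓑 v k lam hD hsym hlam G hAut hfix H x y hxy hx hy
end

section
/- Let D = (P,𝓑) be a symmetric 2-(v,k,λ) design with λ > 1 and let G be a block-transitive automorphism group of D. Suppose that for every block B the induced group G_B^B is semi-regular on B, i.e., every element of G_B that fixes some point of B fixes B pointwise. Let g ∈ G. (a) If the order of g equals λ, then the number of fixed points of g on P is at most min{⌊k/λ⌋·⌊(k−1)/λ⌋ + 1, ⌊k/λ⌋·(λ−1) + 1}. (b) If the order of g is strictly greater than λ, then g fixes at most one point of P. -/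
open scoped Pointwise

variable {P : Type*} [Fintype P] [DecidableEq P]

set_option maxHeartbeats 1000000
set_option linter.unusedSectionVars false

lemma dc {α β : Type*} (A : Finset α) (B : Finset β) (r : α → β → Prop)
    [∀ a b, Decidable (r a b)] :
    (∑ a ∈ A, (B.filter fun b => r a b).card) = ∑ b ∈ B, (A.filter fun a => r a b).card := by
  simp_rw [Finset.card_filter]
  exact Finset.sum_comm

section design
variable {𝓑 : Finset (Finset P)} {v k lam : ℕ}

lemma rep_mul (hD : IsDesign 𝓑 v k lam) (x : P) :
    (𝓑.filter fun B => x ∈ B).card * (k - 1) = lam * (v - 1) := by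
  calc (𝓑.filter fun B => x ∈ B).card * (k - 1)
      = ∑ _B ∈ 𝓑.filter fun B => x ∈ B, (k-1) := by rw [Finset.sum_const, smul_eq_mul, mul_comm]
    _ = ∑ B ∈ 𝓑.filter fun B => x ∈ B, ((Finset.univ.erase x).filter fun y => y ∈ B).card := by
        refine Finset.sum_congr rfl fun B hB => ?_
        rw [Finset.mem_filter] at hB
        have : (Finset.univ.erase x).filter (fun y => y ∈ B) = B.erase x := by
          ext y; simp [Finset.mem_erase, and_comm]
        rw [this, Finset.card_erase_of_mem hB.2, hD.blocks_card B hB.1]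
    _ = ∑ y ∈ Finset.univ.erase x, ((𝓑.filter fun B => x ∈ B).filter fun B => y ∈ B).card :=
        (dc _ _ fun B y => y ∈ B)
    _ = ∑ y ∈ Finset.univ.erase x, lam := by
        refine Finset.sum_congr rfl fun y hy => ?_
        rw [Finset.filter_filter]
        exact hD.pair_blocks x y (Ne.symm (Finset.mem_erase.1 hy).1)
    _ = lam * (v - 1) := by
        rw [Finset.sum_const, smul_eq_mul, mul_comm, Finset.card_erase_of_mem (Finset.mem_univ x),
          Finset.card_univ, hD.card_points]

lemma flag_count (hD : IsDesign 𝓑 v k lam) (hsym : 𝓑.card = v) :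
    (∑ x : P, (𝓑.filter fun B => x ∈ B).card) = v * k := by
  calc (∑ x : P, (𝓑.filter fun B => x ∈ B).card)
      = ∑ B ∈ 𝓑, (Finset.univ.filter fun x : P => x ∈ B).card := dc _ _ fun x B => x ∈ B
    _ = ∑ B ∈ 𝓑, k := by
        refine Finset.sum_congr rfl fun B hB => ?_
        rw [Finset.filter_univ_mem, hD.blocks_card B hB]
    _ = v * k := by rw [Finset.sum_const, smul_eq_mul, hsym]

lemma v_pos (hD : IsDesign 𝓑 v k lam) : 5 ≤ v := by
  have h1 := hD.two_lt_k; have h2 := hD.k_lt_v; omega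

lemma lam_mul (hD : IsDesign 𝓑 v k lam) (hsym : 𝓑.card = v) :
    lam * (v - 1) = k * (k - 1) := by
  have h1 : (∑ x : P, (𝓑.filter fun B => x ∈ B).card * (k-1)) = v * (lam * (v-1)) := by
    rw [Finset.sum_congr rfl fun x _ => rep_mul hD x, Finset.sum_const, smul_eq_mul,
      Finset.card_univ, hD.card_points]
  rw [← Finset.sum_mul, flag_count hD hsym] at h1
  have hv : 0 < v := by have := v_pos hD; omega
  have : v * (k * (k-1)) = v * (lam * (v-1)) := by rw [← h1]; ring
  exact (Nat.eq_of_mul_eq_mul_left hv this).symm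

lemma replication (hD : IsDesign 𝓑 v k lam) (hsym : 𝓑.card = v) (x : P) :
    (𝓑.filter fun B => x ∈ B).card = k := by
  have h1 := rep_mul hD x
  rw [lam_mul hD hsym] at h1
  have hk : 0 < k - 1 := by have := hD.two_lt_k; omega
  exact Nat.eq_of_mul_eq_mul_right hk h1

lemma lam_lt_k (hD : IsDesign 𝓑 v k lam) (hsym : 𝓑.card = v) : lam < k := by
  have h1 := lam_mul hD hsym
  have h2 := hD.two_lt_k
  have h3 := hD.k_lt_v
  have hk : k * (k-1) < k * (v-1) :=
    Nat.mul_lt_mul_of_le_of_lt (le_refl k) (by omega) (by omega)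
  rw [← h1] at hk
  exact Nat.lt_of_mul_lt_mul_right hk


set_option maxHeartbeats 1000000
set_option linter.unusedSectionVars false

lemma sq_sub_helper (a : ℕ) : a * a - a = a * (a - 1) := by
  cases a with
  | zero => simp
  | succ m =>
    rw [Nat.succ_sub_one]
    apply Nat.sub_eq_of_eq_add
    ring

lemma inter_sum1 (hD : IsDesign 𝓑 v k lam) (hsym : 𝓑.card = v) (B : Finset P) (hB : B ∈ 𝓑) :
    (∑ C ∈ 𝓑.erase B, (C ∩ B).card) = k * (k - 1) := by
  calc (∑ C ∈ 𝓑.erase B, (C ∩ B).card)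
      = ∑ C ∈ 𝓑.erase B, (B.filter fun x => x ∈ C).card := by
        refine Finset.sum_congr rfl fun C _ => ?_
        congr 1; ext x; simp [Finset.mem_inter, and_comm]
    _ = ∑ x ∈ B, ((𝓑.erase B).filter fun C => x ∈ C).card := dc _ _ fun C x => x ∈ C
    _ = ∑ x ∈ B, (k - 1) := by
        refine Finset.sum_congr rfl fun x hx => ?_
        have : (𝓑.erase B).filter (fun C => x ∈ C) = (𝓑.filter fun C => x ∈ C).erase B := by
          ext C; simp [Finset.mem_erase, Finset.mem_filter]; tauto
        rw [this, Finset.card_erase_of_mem (Finset.mem_filter.2 ⟨hB, hx⟩),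
          replication hD hsym x]
    _ = k * (k - 1) := by rw [Finset.sum_const, smul_eq_mul, hD.blocks_card B hB]

lemma inter_sum2 (hD : IsDesign 𝓑 v k lam) (B : Finset P) (hB : B ∈ 𝓑) :
    (∑ C ∈ 𝓑.erase B, (C ∩ B).card * ((C ∩ B).card - 1)) = k * (k - 1) * (lam - 1) := by
  calc (∑ C ∈ 𝓑.erase B, (C ∩ B).card * ((C ∩ B).card - 1))
      = ∑ C ∈ 𝓑.erase B, (B.offDiag.filter fun p => p.1 ∈ C ∧ p.2 ∈ C).card := by
        refine Finset.sum_congr rfl fun C _ => ?_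
        have he : B.offDiag.filter (fun p => p.1 ∈ C ∧ p.2 ∈ C) = (C ∩ B).offDiag := by
          ext p; simp [Finset.mem_offDiag, Finset.mem_inter]; tauto
        rw [he, Finset.offDiag_card, sq_sub_helper]
    _ = ∑ p ∈ B.offDiag, ((𝓑.erase B).filter fun C => p.1 ∈ C ∧ p.2 ∈ C).card := by
        simp_rw [Finset.card_filter]
        exact Finset.sum_comm
    _ = ∑ p ∈ B.offDiag, (lam - 1) := by
        refine Finset.sum_congr rfl fun p hp => ?_
        rw [Finset.mem_offDiag] at hp
        have : (𝓑.erase B).filter (fun C => p.1 ∈ C ∧ p.2 ∈ C)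
            = (𝓑.filter fun C => p.1 ∈ C ∧ p.2 ∈ C).erase B := by
          ext C; simp [Finset.mem_erase, Finset.mem_filter]; tauto
        rw [this, Finset.card_erase_of_mem (Finset.mem_filter.2 ⟨hB, hp.1, hp.2.1⟩),
          hD.pair_blocks p.1 p.2 hp.2.2]
    _ = k * (k - 1) * (lam - 1) := by
        rw [Finset.sum_const, smul_eq_mul, Finset.offDiag_card, hD.blocks_card B hB,
          sq_sub_helper]

lemma block_inter (hD : IsDesign 𝓑 v k lam) (hsym : 𝓑.card = v) {B C : Finset P}
    (hB : B ∈ 𝓑) (hC : C ∈ 𝓑) (hne : C ≠ B) : (C ∩ B).card = lam := by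
  have S1 := inter_sum1 hD hsym B hB
  have S2 : (∑ C ∈ 𝓑.erase B, (C ∩ B).card * (C ∩ B).card) = k * (k - 1) * lam := by
    have e : ∀ C ∈ 𝓑.erase B, (C ∩ B).card * (C ∩ B).card
        = (C ∩ B).card * ((C ∩ B).card - 1) + (C ∩ B).card := by
      intro C _
      cases h : (C ∩ B).card with
      | zero => simp
      | succ m => simp [Nat.succ_sub_one]; ring
    rw [Finset.sum_congr rfl e, Finset.sum_add_distrib, inter_sum2 hD B hB, S1]
    have := hD.lam_pos
    cases lam with
    | zero => omega
    | succ m => simp [Nat.succ_sub_one]; ring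
  have S0 : (𝓑.erase B).card = v - 1 := by rw [Finset.card_erase_of_mem hB, hsym]
  have E := lam_mul hD hsym
  have key : (∑ C ∈ 𝓑.erase B, (((C ∩ B).card : ℤ) - (lam : ℤ))^2) = 0 := by
    have expand : ∀ C ∈ 𝓑.erase B, (((C ∩ B).card : ℤ) - (lam : ℤ))^2
        = ((C ∩ B).card * (C ∩ B).card : ℕ)
          - 2 * (lam : ℤ) * ((C ∩ B).card : ℕ) + (lam : ℤ)^2 := by
      intro C _; push_cast; ring
    rw [Finset.sum_congr rfl expand, Finset.sum_add_distrib, Finset.sum_sub_distrib,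
      Finset.sum_const, ← Nat.cast_sum, ← Finset.mul_sum, ← Nat.cast_sum, S1, S2, S0,
      nsmul_eq_mul]
    have Ecast : ((lam : ℤ)) * ((v-1 : ℕ) : ℤ) = ((k * (k-1) : ℕ) : ℤ) := by
      exact_mod_cast congrArg (Nat.cast : ℕ → ℤ) E
    push_cast at Ecast ⊢
    nlinarith [Ecast]
  have hnn : ∀ C ∈ 𝓑.erase B, (0:ℤ) ≤ (((C ∩ B).card : ℤ) - (lam : ℤ))^2 :=
    fun C _ => sq_nonneg _
  have h0 := (Finset.sum_eq_zero_iff_of_nonneg hnn).1 key C (Finset.mem_erase.2 ⟨hne, hC⟩)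
  have : ((C ∩ B).card : ℤ) = (lam : ℤ) := by nlinarith [h0]
  exact_mod_cast this

end design

section grp
open scoped Pointwise
variable {𝓑 : Finset (Finset P)} {v k lam : ℕ} {G : Subgroup (Equiv.Perm P)}

lemma smul_block (hAut : IsAutGroup G 𝓑) (g : G) {B : Finset P} (hB : B ∈ 𝓑) :
    g • B ∈ 𝓑 := hAut (g : Equiv.Perm P) g.2 B hB

lemma fix_pow {β : Type*} [MulAction G β] (g : G) {x : β} (hx : g • x = x) (i : ℕ) :
    g ^ i • x = x := by
  induction i with
  | zero => simp
  | succ n ih => rw [pow_succ, mul_smul, hx, ih]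

lemma exists_moved {g : G} (h : g ≠ 1) : ∃ p : P, g • p ≠ p := by
  by_contra hc
  push_neg at hc
  exact h (Subtype.ext (Equiv.ext fun p => hc p))

/-- Lemma A: a group element fixing two distinct blocks pointwise is trivial. -/
lemma fix_two_blocks (hD : IsDesign 𝓑 v k lam) (hsym : 𝓑.card = v) (hlam : 1 < lam)
    (hAut : IsAutGroup G 𝓑)
    (hsemi : ∀ B ∈ 𝓑, ∀ g : G, g • B = B → (∃ a ∈ B, g • a = a) → ∀ a ∈ B, g • a = a)
    {h : G} {B C : Finset P} (hB : B ∈ 𝓑) (hC : C ∈ 𝓑) (hne : B ≠ C)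
    (hfB : ∀ p ∈ B, h • p = p) (hfC : ∀ p ∈ C, h • p = p) : h = 1 := by
  by_contra hne1
  obtain ⟨p, hp⟩ := exists_moved hne1
  have hI : (B ∩ C).card = lam := by
    rw [Finset.inter_comm]; exact block_inter hD hsym hB hC hne.symm
  obtain ⟨x', hx'I, y', hy'I, hxy'⟩ := Finset.one_lt_card.1 (by omega : 1 < (B ∩ C).card)
  -- every block through p contains B ∩ C
  have key : ∀ D' ∈ 𝓑, p ∈ D' → B ∩ C ⊆ D' := by
    intro D' hD' hpD'
    by_contra hsub
    obtain ⟨z, hzI, hzD'⟩ := Finset.not_subset.1 hsub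
    have hD'B : D' ≠ B := fun h' => hp (hfB p (h' ▸ hpD'))
    have hD'C : D' ≠ C := fun h' => hp (hfC p (h' ▸ hpD'))
    have c1 : (D' ∩ B).card = lam := block_inter hD hsym hB hD' hD'B
    have c2 : (D' ∩ C).card = lam := block_inter hD hsym hC hD' hD'C
    have csmall : (D' ∩ (B ∩ C)).card < lam := by
      have : D' ∩ (B ∩ C) ⊆ (B ∩ C).erase z := by
        intro w hw
        rw [Finset.mem_erase]
        rw [Finset.mem_inter] at hw
        exact ⟨fun he => hzD' (he ▸ hw.1), hw.2⟩
      calc (D' ∩ (B ∩ C)).card ≤ ((B ∩ C).erase z).card := Finset.card_le_card this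
        _ < lam := by rw [Finset.card_erase_of_mem hzI, hI]; omega
    have big : lam + 1 ≤ (D' ∩ (B ∪ C)).card := by
      have e1 : D' ∩ (B ∪ C) = (D' ∩ B) ∪ (D' ∩ C) := Finset.inter_union_distrib_left _ _ _
      have e2 : (D' ∩ B) ∩ (D' ∩ C) = D' ∩ (B ∩ C) := by
        ext w; simp [Finset.mem_inter]; tauto
      have := Finset.card_union_add_card_inter (D' ∩ B) (D' ∩ C)
      rw [e2, c1, c2] at this
      rw [e1]
      omega
    have hfix : ∀ w ∈ D' ∩ (B ∪ C), h • w = w := by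
      intro w hw
      rw [Finset.mem_inter, Finset.mem_union] at hw
      rcases hw.2 with h' | h'
      · exact hfB w h'
      · exact hfC w h'
    have hsub2 : D' ∩ (B ∪ C) ⊆ (h • D') ∩ D' := by
      intro w hw
      have hwD' : w ∈ D' := (Finset.mem_inter.1 hw).1
      rw [Finset.mem_inter]
      refine ⟨?_, hwD'⟩
      rw [Finset.mem_smul_finset]
      exact ⟨w, hwD', hfix w hw⟩
    have hDD : h • D' = D' := by
      by_contra hne2
      have := block_inter hD hsym (smul_block hAut h hD') hD' (fun he => hne2 he.symm)
      have hle := Finset.card_le_card hsub2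
      rw [Finset.inter_comm] at this
      omega
    have hfixall := hsemi D' hD' h hDD ?_
    · exact hp (hfixall p hpD')
    · obtain ⟨w, hw⟩ := Finset.card_pos.1 (by omega : 0 < (D' ∩ (B ∪ C)).card)
      exact ⟨w, (Finset.mem_inter.1 hw).1, hfix w hw⟩
  -- hence at most lam blocks through p, but there are k > lam
  have hpx' : p ≠ x' := by
    intro he
    exact hp (he ▸ hfB x' (Finset.mem_inter.1 hx'I).1)
  have hsub3 : 𝓑.filter (fun B' => p ∈ B') ⊆ 𝓑.filter (fun B' => p ∈ B' ∧ x' ∈ B') := by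
    intro B' hB'
    rw [Finset.mem_filter] at hB' ⊢
    exact ⟨hB'.1, hB'.2, key B' hB'.1 hB'.2 hx'I⟩
  have hcard := Finset.card_le_card hsub3
  rw [replication hD hsym p, hD.pair_blocks p x' hpx'] at hcard
  have := lam_lt_k hD hsym
  omega


lemma per_of_eq {h : G} {B : Finset P} {i j : ℕ} (hij : i ≤ j) (he : h ^ i • B = h ^ j • B) :
    h ^ (j - i) • B = B := by
  have h1 : h ^ i • (h ^ (j - i) • B) = h ^ i • B := by
    rw [smul_smul, ← pow_add, Nat.add_sub_cancel' hij]
    exact he.symm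
  exact MulAction.injective (h ^ i) h1

lemma orbit_card {h : G} {B : Finset P}
    (hfull : ∀ i, 0 < i → i < orderOf h → h ^ i • B ≠ B) :
    ((Finset.range (orderOf h)).image (fun i => h ^ i • B)).card = orderOf h := by
  rw [Finset.card_image_of_injOn, Finset.card_range]
  intro i hi j hj hij
  rw [Finset.mem_coe, Finset.mem_range] at hi hj
  by_contra hne
  rcases Nat.lt_or_ge i j with hlt | hge
  · exact hfull (j - i) (by omega) (by omega) (per_of_eq (le_of_lt hlt) hij)
  · have : j < i := by omega
    exact hfull (i - j) (by omega) (by omega) (per_of_eq (le_of_lt this) hij.symm)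

lemma orbit_mem_pow {h : G} {B : Finset P} {T : Finset (Finset P)} (hBT : B ∈ T)
    (hT : ∀ C ∈ T, h • C ∈ T) (i : ℕ) : h ^ i • B ∈ T := by
  induction i with
  | zero => simpa using hBT
  | succ n ih => rw [pow_succ', mul_smul]; exact hT _ ih

lemma orbit_div {h : G} {m : ℕ} (hm : m = orderOf h) :
    ∀ T : Finset (Finset P), (∀ C ∈ T, h • C ∈ T) →
    (∀ C ∈ T, ∀ i, 0 < i → i < m → h ^ i • C ≠ C) → m ∣ T.card := by
  intro T
  induction T using Finset.strongInduction with
  | _ T ih =>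
    intro hT hfull
    rcases Finset.eq_empty_or_nonempty T with rfl | ⟨C, hC⟩
    · simp
    · have hm0 : 0 < m := hm ▸ orderOf_pos h
      set O : Finset (Finset P) := (Finset.range m).image (fun i => h ^ i • C) with hO
      have hCO : C ∈ O := by
        rw [hO, Finset.mem_image]
        exact ⟨0, Finset.mem_range.2 hm0, by simp⟩
      have OC : O.card = m := by rw [hO, hm]; exact orbit_card (hm ▸ hfull C hC)
      have Osub : O ⊆ T := by
        intro D hD
        rw [hO, Finset.mem_image] at hD
        obtain ⟨i, _, rfl⟩ := hD
        exact orbit_mem_pow hC hT i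
      have Oinv : ∀ z ∈ O, h⁻¹ • z ∈ O := by
        intro z hz
        rw [hO, Finset.mem_image] at hz ⊢
        obtain ⟨i, hi, rfl⟩ := hz
        refine ⟨(m - 1 + i) % m, Finset.mem_range.2 (Nat.mod_lt _ hm0), ?_⟩
        have hinv : h⁻¹ = h ^ (m - 1) := by
          refine inv_eq_of_mul_eq_one_right ?_
          rw [← pow_succ']
          have h1 : m - 1 + 1 = m := by omega
          rw [h1, hm, pow_orderOf_eq_one]
        rw [smul_smul, hinv, ← pow_add, hm, pow_mod_orderOf]
      have hssub : T \ O ⊂ T := Finset.sdiff_ssubset Osub ⟨C, hCO⟩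
      have hT' : ∀ D ∈ T \ O, h • D ∈ T \ O := by
        intro D hDm
        rw [Finset.mem_sdiff] at hDm ⊢
        refine ⟨hT D hDm.1, fun hin => hDm.2 ?_⟩
        have h2 := Oinv _ hin
        rwa [inv_smul_smul] at h2
      have hfull' : ∀ C' ∈ T \ O, ∀ i, 0 < i → i < m → h ^ i • C' ≠ C' :=
        fun C' hC' => hfull C' (Finset.mem_sdiff.1 hC').1
      have hdvd := ih (T \ O) hssub hT' hfull'
      have hle : m ≤ T.card := OC ▸ Finset.card_le_card Osub
      have hcard : T.card = (T \ O).card + m := by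
        rw [Finset.card_sdiff_of_subset Osub, OC]; omega
      rw [hcard]
      exact Nat.dvd_add hdvd dvd_rfl


variable (hD : IsDesign 𝓑 v k lam) (hsym : 𝓑.card = v) (hlam : 1 < lam)
  (hAut : IsAutGroup G 𝓑)
  (hsemi : ∀ B ∈ 𝓑, ∀ g : G, g • B = B → (∃ a ∈ B, g • a = a) → ∀ a ∈ B, g • a = a)

include hD hsym hlam hAut hsemi

/-- If `h` fixes two points of a non-fixed block `B` through them, its orbit on the
blocks through the pair is full. -/
lemma block_dichotomy {h : G} {x : P} (hx : h • x = x)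
    {B : Finset P} (hB : B ∈ 𝓑) (hxB : x ∈ B) (hmoved : h • B ≠ B) :
    ∀ i, 0 < i → i < orderOf h → h ^ i • B ≠ B := by
  intro i hi0 him hiB
  have hpow_ne : h ^ i ≠ 1 := by
    intro he
    have := Nat.le_of_dvd hi0 (orderOf_dvd_of_pow_eq_one he)
    omega
  have h2 : h ^ i • (h • B) = h • B := by
    rw [smul_smul, ← pow_succ, pow_succ', mul_smul, hiB]
  have hBs : h • B ∈ 𝓑 := smul_block hAut h hB
  have hxHB : x ∈ h • B := by
    rw [Finset.mem_smul_finset]; exact ⟨x, hxB, hx⟩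
  have fix1 : ∀ p ∈ B, h ^ i • p = p :=
    hsemi B hB (h ^ i) hiB ⟨x, hxB, fix_pow h hx i⟩
  have fix2 : ∀ p ∈ h • B, h ^ i • p = p :=
    hsemi _ hBs (h ^ i) h2 ⟨x, hxHB, fix_pow h hx i⟩
  exact hpow_ne (fix_two_blocks hD hsym hlam hAut hsemi hB hBs
    (fun he => hmoved he.symm) fix1 fix2)

/-- A nontrivial `h` fixing a point `x` fixes (setwise) at most one block through `x`. -/
lemma one_fixed_block {h : G} (hne1 : h ≠ 1) {x : P} (hx : h • x = x)
    {B C : Finset P} (hB : B ∈ 𝓑) (hC : C ∈ 𝓑) (hxB : x ∈ B) (hxC : x ∈ C)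
    (hBB : h • B = B) (hCC : h • C = C) : B = C := by
  by_contra hne
  exact hne1 (fix_two_blocks hD hsym hlam hAut hsemi hB hC hne
    (hsemi B hB h hBB ⟨x, hxB, hx⟩) (hsemi C hC h hCC ⟨x, hxC, hx⟩))

/-- Structure of the action on the `lam` blocks through two fixed points. -/
lemma pair_structure {h : G} (hne1 : h ≠ 1) {x y : P} (hx : h • x = x) (hy : h • y = y)
    (hxy : x ≠ y) :
    orderOf h ∣ ((𝓑.filter fun B => x ∈ B ∧ y ∈ B).filter fun B => ¬ h • B = B).card ∧
    ((𝓑.filter fun B => x ∈ B ∧ y ∈ B).filter fun B => h • B = B).card ≤ 1 := by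
  constructor
  · refine orbit_div rfl _ ?_ ?_
    · intro C hC
      rw [Finset.mem_filter, Finset.mem_filter] at hC ⊢
      obtain ⟨⟨hC𝓑, hxC, hyC⟩, hmv⟩ := hC
      refine ⟨⟨smul_block hAut h hC𝓑, ?_, ?_⟩, ?_⟩
      · rw [Finset.mem_smul_finset]; exact ⟨x, hxC, hx⟩
      · rw [Finset.mem_smul_finset]; exact ⟨y, hyC, hy⟩
      · intro he
        exact hmv (MulAction.injective h he)
    · intro C hC
      rw [Finset.mem_filter, Finset.mem_filter] at hC
      exact block_dichotomy hD hsym hlam hAut hsemi hx hC.1.1 hC.1.2.1 hC.2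
  · rw [Finset.card_le_one]
    intro B hB C hC
    rw [Finset.mem_filter, Finset.mem_filter] at hB hC
    exact one_fixed_block hD hsym hlam hAut hsemi hne1 hx hB.1.1 hC.1.1
      hB.1.2.1 hC.1.2.1 hB.2 hC.2

/-- If the order of `h` exceeds `lam`, `h` cannot fix two distinct points. -/
lemma part_b_core {h : G} (hord : lam < orderOf h) {x y : P} (hx : h • x = x)
    (hy : h • y = y) (hxy : x ≠ y) : False := by
  have hne1 : h ≠ 1 := by
    intro he
    rw [he, orderOf_one] at hord
    omega
  obtain ⟨hdvd, hle1⟩ := pair_structure hD hsym hlam hAut hsemi hne1 hx hy hxy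
  have hsplit := Finset.card_filter_add_card_filter_not
    (s := 𝓑.filter fun B => x ∈ B ∧ y ∈ B) (p := fun B => h • B = B)
  rw [hD.pair_blocks x y hxy] at hsplit
  have hmvle : ((𝓑.filter fun B => x ∈ B ∧ y ∈ B).filter fun B => ¬ h • B = B).card ≤ lam := by
    omega
  have : ((𝓑.filter fun B => x ∈ B ∧ y ∈ B).filter fun B => ¬ h • B = B).card = 0 := by
    rcases Nat.eq_zero_or_pos ((𝓑.filter fun B => x ∈ B ∧ y ∈ B).filter
      fun B => ¬ h • B = B).card with h0 | h0
    · exact h0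
    · have := Nat.le_of_dvd h0 hdvd
      omega
  omega

/-- If `orderOf g = lam` and `g` fixes `x ≠ y`, all blocks through the pair are moved,
with full orbit, and form a single orbit. -/
lemma pair_full {h : G} (hord : orderOf h = lam) {x y : P} (hx : h • x = x)
    (hy : h • y = y) (hxy : x ≠ y) :
    ∀ B ∈ 𝓑.filter fun B => x ∈ B ∧ y ∈ B,
      (∀ i, 0 < i → i < lam → h ^ i • B ≠ B) ∧
      (Finset.range lam).image (fun i => h ^ i • B) = 𝓑.filter fun B => x ∈ B ∧ y ∈ B := by
  have hne1 : h ≠ 1 := by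
    intro he
    rw [he, orderOf_one] at hord
    omega
  obtain ⟨hdvd, hle1⟩ := pair_structure hD hsym hlam hAut hsemi hne1 hx hy hxy
  have hsplit := Finset.card_filter_add_card_filter_not
    (s := 𝓑.filter fun B => x ∈ B ∧ y ∈ B) (p := fun B => h • B = B)
  rw [hD.pair_blocks x y hxy] at hsplit
  rw [hord] at hdvd
  have hallmv : ((𝓑.filter fun B => x ∈ B ∧ y ∈ B).filter fun B => ¬ h • B = B).card = lam := by
    rcases Nat.eq_zero_or_pos ((𝓑.filter fun B => x ∈ B ∧ y ∈ B).filter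
      fun B => ¬ h • B = B).card with h0 | h0
    · omega
    · have h1 := Nat.le_of_dvd h0 hdvd
      have h2 : ((𝓑.filter fun B => x ∈ B ∧ y ∈ B).filter
          fun B => ¬ h • B = B).card ≤ lam := by omega
      omega
  intro B hB
  have hmovedB : ¬ h • B = B := by
    intro hfix
    have : ((𝓑.filter fun B => x ∈ B ∧ y ∈ B).filter fun B => h • B = B).card ≥ 1 := by
      have : B ∈ (𝓑.filter fun B => x ∈ B ∧ y ∈ B).filter fun B => h • B = B :=
        Finset.mem_filter.2 ⟨hB, hfix⟩
      exact Finset.card_pos.2 ⟨B, this⟩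
    omega
  rw [Finset.mem_filter] at hB
  have hfull : ∀ i, 0 < i → i < lam → h ^ i • B ≠ B := by
    have := block_dichotomy hD hsym hlam hAut hsemi hx hB.1 hB.2.1 hmovedB
    rw [hord] at this
    exact this
  refine ⟨hfull, ?_⟩
  have hsub : (Finset.range lam).image (fun i => h ^ i • B)
      ⊆ 𝓑.filter fun B => x ∈ B ∧ y ∈ B := by
    intro D hDm
    rw [Finset.mem_image] at hDm
    obtain ⟨i, _, rfl⟩ := hDm
    rw [Finset.mem_filter]
    refine ⟨?_, ?_, ?_⟩
    · exact orbit_mem_pow hB.1 (fun C hC => smul_block hAut h hC) i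
    · rw [Finset.mem_smul_finset]; exact ⟨x, hB.2.1, fix_pow h hx i⟩
    · rw [Finset.mem_smul_finset]; exact ⟨y, hB.2.2, fix_pow h hy i⟩
  apply Finset.eq_of_subset_of_card_le hsub
  rw [hD.pair_blocks x y hxy]
  have := orbit_card (h := h) (B := B) (by rw [hord]; exact hfull)
  rw [hord] at this
  omega


/-- Blocks through a fixed point of `g` (of order `lam`) have full orbits; `lam ∣ k`. -/
lemma lam_dvd_k {g : G} (hord : orderOf g = lam) {x : P} (hx : g • x = x) :
    (∀ B ∈ 𝓑, x ∈ B → ∀ i, 0 < i → i < lam → g ^ i • B ≠ B) ∧ lam ∣ k := by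
  have full : ∀ B ∈ 𝓑, x ∈ B → ∀ i, 0 < i → i < lam → g ^ i • B ≠ B := by
    intro B hB hxB i hi0 hil hiB
    set h := g ^ i with hh
    have hne : h ≠ 1 := by
      intro he
      rw [hh] at he
      have h2 := orderOf_dvd_of_pow_eq_one he
      rw [hord] at h2
      have := Nat.le_of_dvd hi0 h2
      omega
    have hfixB : ∀ p ∈ B, h • p = p := hsemi B hB h hiB ⟨x, hxB, fix_pow g hx i⟩
    have hdvd1 : orderOf h ∣ lam := by
      apply orderOf_dvd_of_pow_eq_one
      rw [hh, ← pow_mul, mul_comm, pow_mul, ← hord, pow_orderOf_eq_one, one_pow]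
    obtain ⟨x', hx'B, y', hy'B, hxy'⟩ := Finset.one_lt_card.1
      (by rw [hD.blocks_card B hB]; have := hD.two_lt_k; omega : 1 < B.card)
    have hx' : h • x' = x' := hfixB x' hx'B
    have hy' : h • y' = y' := hfixB y' hy'B
    obtain ⟨hdvd, hle1⟩ := pair_structure hD hsym hlam hAut hsemi hne hx' hy' hxy'
    have hsplit := Finset.card_filter_add_card_filter_not
      (s := 𝓑.filter fun B => x' ∈ B ∧ y' ∈ B) (p := fun B => h • B = B)
    rw [hD.pair_blocks x' y' hxy'] at hsplit
    have hfix1 : 1 ≤ ((𝓑.filter fun B => x' ∈ B ∧ y' ∈ B).filter fun B => h • B = B).card := by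
      apply Finset.card_pos.2
      exact ⟨B, Finset.mem_filter.2 ⟨Finset.mem_filter.2 ⟨hB, hx'B, hy'B⟩, hiB⟩⟩
    have hmv : ((𝓑.filter fun B => x' ∈ B ∧ y' ∈ B).filter fun B => ¬ h • B = B).card
        = lam - 1 := by omega
    rw [hmv] at hdvd
    have hone : orderOf h ∣ 1 := by
      have := Nat.dvd_sub hdvd1 hdvd
      have he : lam - (lam - 1) = 1 := by omega
      rwa [he] at this
    exact hne (orderOf_eq_one_iff.1 (Nat.eq_one_of_dvd_one hone))
  refine ⟨full, ?_⟩
  have hdvd := orbit_div (G := G) (h := g) hord.symm (𝓑.filter fun B => x ∈ B) ?_ ?_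
  · rwa [replication hD hsym x] at hdvd
  · intro C hC
    rw [Finset.mem_filter] at hC ⊢
    refine ⟨smul_block hAut g hC.1, ?_⟩
    rw [Finset.mem_smul_finset]
    exact ⟨x, hC.2, hx⟩
  · intro C hC
    rw [Finset.mem_filter] at hC
    exact full C hC.1 hC.2

end grp

section fisher
set_option linter.unusedSectionVars false
variable {𝓑 : Finset (Finset P)} {v k lam : ℕ}

/-- Fisher-type bound: a set of points lying on all `lam` blocks through a pair, such
that any block through two of them passes through the pair, has at most `(k+lam-1)/lam`
points. -/
lemma fisher_line (hD : IsDesign 𝓑 v k lam) (hsym : 𝓑.card = v) (hlam : 1 < lam)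
    {x y : P} (hxy : x ≠ y) {L : Finset P}
    (hall : ∀ z ∈ L, ∀ C ∈ 𝓑, x ∈ C → y ∈ C → z ∈ C)
    (hpair : ∀ z ∈ L, ∀ w ∈ L, z ≠ w → ∀ C ∈ 𝓑, z ∈ C → w ∈ C → x ∈ C ∧ y ∈ C) :
    lam * L.card ≤ k + lam - 1 := by
  set S := 𝓑.filter fun B => x ∈ B ∧ y ∈ B with hS
  have hScard : S.card = lam := hD.pair_blocks x y hxy
  have hSsub : S ⊆ 𝓑 := Finset.filter_subset _ _
  have key : ∀ z ∈ L, ((𝓑 \ S).filter fun C => z ∈ C).card = k - lam := by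
    intro z hz
    have he : (𝓑 \ S).filter (fun C => z ∈ C) = (𝓑.filter fun C => z ∈ C) \ S := by
      ext C
      simp only [Finset.mem_filter, Finset.mem_sdiff]
      tauto
    have hsub2 : S ⊆ 𝓑.filter fun C => z ∈ C := by
      intro C hC
      rw [hS, Finset.mem_filter] at hC
      exact Finset.mem_filter.2 ⟨hC.1, hall z hz C hC.1 hC.2.1 hC.2.2⟩
    rw [he, Finset.card_sdiff_of_subset hsub2, replication hD hsym z, hScard]
  have count : L.card * (k - lam) ≤ v - lam := by
    have e1 : (∑ z ∈ L, ((𝓑 \ S).filter fun C => z ∈ C).card) = L.card * (k - lam) := by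
      rw [Finset.sum_congr rfl key, Finset.sum_const, smul_eq_mul]
    have e2 : (∑ z ∈ L, ((𝓑 \ S).filter fun C => z ∈ C).card)
        = ∑ C ∈ 𝓑 \ S, (L.filter fun z => z ∈ C).card := by
      simp_rw [Finset.card_filter]
      exact Finset.sum_comm
    have e3 : ∀ C ∈ 𝓑 \ S, (L.filter fun z => z ∈ C).card ≤ 1 := by
      intro C hC
      rw [Finset.mem_sdiff] at hC
      rw [Finset.card_le_one]
      intro a ha b hb
      rw [Finset.mem_filter] at ha hb
      by_contra hne
      have := hpair a ha.1 b hb.1 hne C hC.1 ha.2 hb.2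
      exact hC.2 (Finset.mem_filter.2 ⟨hC.1, this⟩)
    have e4 : (∑ C ∈ 𝓑 \ S, (L.filter fun z => z ∈ C).card) ≤ (𝓑 \ S).card :=
      le_trans (Finset.sum_le_sum e3) (by rw [Finset.sum_const, smul_eq_mul, mul_one])
    have e5 : (𝓑 \ S).card = v - lam := by rw [Finset.card_sdiff_of_subset hSsub, hScard, hsym]
    omega
  -- arithmetic: lam * s * (k - lam) ≤ lam * (v - lam) = (k - lam) * (k + lam - 1)
  have hlk := lam_lt_k hD hsym
  have hkv : k + 1 < v := by have := hD.k_lt_v; have := v_pos hD; omega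
  have hE := lam_mul hD hsym
  have hzE : (lam : ℤ) * ((v:ℤ) - 1) = (k:ℤ) * ((k:ℤ) - 1) := by
    have : ((lam * (v-1) : ℕ) : ℤ) = ((k * (k-1) : ℕ) : ℤ) :=
      congrArg (Nat.cast : ℕ → ℤ) hE
    push_cast at this
    have hv1 : ((v - 1 : ℕ) : ℤ) = (v:ℤ) - 1 := by have := v_pos hD; omega
    have hk1 : ((k - 1 : ℕ) : ℤ) = (k:ℤ) - 1 := by have := hD.two_lt_k; omega
    rwa [hv1, hk1] at this
  have hzcount : (L.card : ℤ) * ((k:ℤ) - lam) ≤ (v:ℤ) - lam := by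
    have : ((L.card * (k - lam) : ℕ) : ℤ) ≤ ((v - lam : ℕ) : ℤ) := by exact_mod_cast count
    push_cast at this
    have h1 : ((k - lam : ℕ) : ℤ) = (k:ℤ) - lam := by omega
    have h2 : ((v - lam : ℕ) : ℤ) = (v:ℤ) - lam := by omega
    rwa [h1, h2] at this
  have hmain : (lam : ℤ) * L.card ≤ (k:ℤ) + lam - 1 := by
    have hpos : (0:ℤ) < (k:ℤ) - lam := by
      have : (lam:ℤ) < k := by exact_mod_cast hlk
      linarith
    have h2 : ((lam:ℤ) * L.card) * ((k:ℤ) - lam) ≤ ((k:ℤ) + lam - 1) * ((k:ℤ) - lam) := by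
      nlinarith [hzcount, hzE, hD.lam_pos]
    exact le_of_mul_le_mul_right h2 hpos
  have : ((lam * L.card : ℕ) : ℤ) ≤ ((k + lam - 1 : ℕ) : ℤ) := by
    push_cast
    have h1 : ((k + lam - 1 : ℕ) : ℤ) = (k:ℤ) + lam - 1 := by
      have := hD.two_lt_k; omega
    rw [h1]
    exact hmain
  exact_mod_cast this

end fisher


/-- **Lemma 4.5.** Let `G` be a block-transitive automorphism group of a symmetric design
with `λ > 1` such that for every block `B` the induced group `G_B^B` is semi-regular on
`B`. If `g ∈ G` has order `λ` then `g` fixes at most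
`min (⌊k/λ⌋⌊(k-1)/λ⌋ + 1) (⌊k/λ⌋(λ-1) + 1)` points, and if the order of `g` exceeds `λ`
then `g` fixes at most one point. -/
theorem stmt_10 (𝓑 : Finset (Finset P)) (v k lam : ℕ)
    (hD : IsDesign 𝓑 v k lam) (hsym : 𝓑.card = v) (hlam : 1 < lam)
    (G : Subgroup (Equiv.Perm P)) (hAut : IsAutGroup G 𝓑)
    (hbt : IsBlockTransitive G 𝓑)
    (hsemi : ∀ B ∈ 𝓑, ∀ g : G, g • B = B → (∃ a ∈ B, g • a = a) → ∀ a ∈ B, g • a = a)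
    (g : G) :
    (orderOf g = lam →
      Nat.card {x : P // g • x = x} ≤
        min ((k / lam) * ((k - 1) / lam) + 1) ((k / lam) * (lam - 1) + 1)) ∧
    (lam < orderOf g → Nat.card {x : P // g • x = x} ≤ 1) := by
  have hcard : Nat.card {x : P // g • x = x}
      = (Finset.univ.filter fun x : P => g • x = x).card := by
    rw [Nat.card_eq_fintype_card, Fintype.card_subtype]
  constructor
  · -- part (a)
    intro hord
    rw [hcard]
    set F := Finset.univ.filter fun x : P => g • x = x with hF
    by_cases hF1 : F.card ≤ 1
    · exact le_trans hF1 (le_min (by omega) (by omega))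
    · push_neg at hF1
      obtain ⟨x, hxF, y, hyF, hxy⟩ := Finset.one_lt_card.1 hF1
      have hx : g • x = x := (Finset.mem_filter.1 hxF).2
      have hy : g • y = y := (Finset.mem_filter.1 hyF).2
      obtain ⟨hfullx, hdvdk⟩ := lam_dvd_k hD hsym hlam hAut hsemi hord hx
      set t := k / lam with ht
      have hkt : k = lam * t := (Nat.mul_div_cancel' hdvdk).symm
      have hk2 := hD.two_lt_k
      have htpos : 1 ≤ t := by
        rcases Nat.eq_zero_or_pos t with h0 | h0
        · rw [h0, mul_zero] at hkt; omega
        · exact h0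
      -- per-block bound
      have perblock : ∀ B ∈ 𝓑.filter (fun B => x ∈ B),
          ((F.erase x).filter fun z => z ∈ B).card ≤ min lam t - 1 := by
        intro B hB'
        rw [Finset.mem_filter] at hB'
        obtain ⟨hB, hxB⟩ := hB'
        rcases Finset.eq_empty_or_nonempty ((F.erase x).filter fun z => z ∈ B) with he | ⟨y', hy'⟩
        · rw [he]; simp
        · rw [Finset.mem_filter, Finset.mem_erase] at hy'
          obtain ⟨⟨hy'x, hy'F⟩, hy'B⟩ := hy'
          have hgy' : g • y' = y' := (Finset.mem_filter.1 hy'F).2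
          set L := F.filter (fun z => z ∈ B) with hL
          have hxL : x ∈ L := Finset.mem_filter.2 ⟨hxF, hxB⟩
          have heq : (F.erase x).filter (fun z => z ∈ B) = L.erase x := by
            ext z
            simp only [hL, Finset.mem_erase, Finset.mem_filter]
            tauto
          rw [heq, Finset.card_erase_of_mem hxL]
          have hfixL : ∀ z ∈ L, g • z = z := fun z hz =>
            (Finset.mem_filter.1 (Finset.mem_filter.1 hz).1).2
          have hzB : ∀ z ∈ L, z ∈ B := fun z hz => (Finset.mem_filter.1 hz).2
          have horbit : ∀ z w : P, g • z = z → g • w = w → z ≠ w → z ∈ B → w ∈ B →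
              ∀ C ∈ 𝓑, z ∈ C → w ∈ C → ∃ i, i < lam ∧ g ^ i • B = C := by
            intro z w hz hw hzw hzB' hwB' C hC hzC hwC
            have horb := (pair_full hD hsym hlam hAut hsemi hord hz hw hzw B
              (Finset.mem_filter.2 ⟨hB, hzB', hwB'⟩)).2
            have hmem : C ∈ (Finset.range lam).image (fun i => g ^ i • B) := by
              rw [horb]
              exact Finset.mem_filter.2 ⟨hC, hzC, hwC⟩
            rw [Finset.mem_image] at hmem
            obtain ⟨i, hi, hie⟩ := hmem
            exact ⟨i, Finset.mem_range.1 hi, hie⟩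
          have hmv : g • B ≠ B := by
            have := hfullx B hB hxB 1 one_pos hlam
            rwa [pow_one] at this
          have hLlam : L.card ≤ lam := by
            have hsubL : L ⊆ (g • B) ∩ B := by
              intro z hz
              rw [Finset.mem_inter]
              refine ⟨?_, hzB z hz⟩
              rw [Finset.mem_smul_finset]
              exact ⟨z, hzB z hz, hfixL z hz⟩
            have hbi := block_inter hD hsym hB (smul_block hAut g hB) hmv
            calc L.card ≤ ((g • B) ∩ B).card := Finset.card_le_card hsubL
              _ = lam := hbi
          have hLt : L.card ≤ t := by
            have hxy' : x ≠ y' := fun he => hy'x he.symm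
            have hfl := fisher_line hD hsym hlam hxy' (L := L) ?_ ?_
            · rw [hkt] at hfl
              have h2 : lam * L.card < lam * (t + 1) := by
                have h3 : lam * (t + 1) = lam * t + lam := by ring
                omega
              have := Nat.lt_of_mul_lt_mul_left h2
              omega
            · intro z hz C hC hxC hy'C
              obtain ⟨i, hi, rfl⟩ := horbit x y' hx hgy' hxy' hxB hy'B C hC hxC hy'C
              rw [Finset.mem_smul_finset]
              exact ⟨z, hzB z hz, fix_pow g (hfixL z hz) i⟩
            · intro z hzL w hwL hzw C hC hzC hwC
              obtain ⟨i, hi, rfl⟩ := horbit z w (hfixL z hzL) (hfixL w hwL) hzw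
                (hzB z hzL) (hzB w hwL) C hC hzC hwC
              constructor
              · rw [Finset.mem_smul_finset]; exact ⟨x, hxB, fix_pow g hx i⟩
              · rw [Finset.mem_smul_finset]; exact ⟨y', hy'B, fix_pow g hgy' i⟩
          exact Nat.sub_le_sub_right (le_min hLlam hLt) 1
      -- double count
      have hdc : (∑ y' ∈ F.erase x, ((𝓑.filter fun B => x ∈ B).filter fun B => y' ∈ B).card)
          = ∑ B ∈ 𝓑.filter (fun B => x ∈ B), ((F.erase x).filter fun z => z ∈ B).card := by
        simp_rw [Finset.card_filter]
        exact Finset.sum_comm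
      have hlhs : (∑ y' ∈ F.erase x, ((𝓑.filter fun B => x ∈ B).filter fun B => y' ∈ B).card)
          = (F.card - 1) * lam := by
        rw [Finset.sum_congr rfl (fun y' hy' => ?_), Finset.sum_const, smul_eq_mul,
          Finset.card_erase_of_mem hxF]
        rw [Finset.filter_filter]
        exact hD.pair_blocks x y' (fun he => (Finset.mem_erase.1 hy').1 he.symm)
      have hrhs : (∑ B ∈ 𝓑.filter (fun B => x ∈ B), ((F.erase x).filter fun z => z ∈ B).card)
          ≤ k * (min lam t - 1) := by
        calc (∑ B ∈ 𝓑.filter (fun B => x ∈ B), ((F.erase x).filter fun z => z ∈ B).card)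
            ≤ ∑ _B ∈ 𝓑.filter (fun B => x ∈ B), (min lam t - 1) := Finset.sum_le_sum perblock
          _ = k * (min lam t - 1) := by
              rw [Finset.sum_const, smul_eq_mul, replication hD hsym x]
      have htotal : (F.card - 1) * lam ≤ lam * (t * (min lam t - 1)) := by
        rw [← hlhs, hdc]
        calc _ ≤ k * (min lam t - 1) := hrhs
          _ = lam * (t * (min lam t - 1)) := by rw [hkt]; ring
      have hfle : F.card - 1 ≤ t * (min lam t - 1) := by
        have h2 : lam * (F.card - 1) ≤ lam * (t * (min lam t - 1)) := by
          rw [mul_comm lam (F.card - 1)]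
          exact htotal
        exact Nat.le_of_mul_le_mul_left h2 (by omega)
      have hk1div : (k - 1) / lam = t - 1 := by
        obtain ⟨m, hm⟩ : ∃ m, t = m + 1 := ⟨t - 1, by omega⟩
        have hk' : k - 1 = lam * m + (lam - 1) := by
          have : k = lam * m + lam := by rw [hkt, hm]; ring
          omega
        rw [hk', Nat.mul_add_div (by omega : 0 < lam), Nat.div_eq_of_lt (by omega : lam - 1 < lam)]
        omega
      rw [hk1div]
      have hb1 : t * (min lam t - 1) ≤ t * (t - 1) :=
        Nat.mul_le_mul_left t (Nat.sub_le_sub_right (min_le_right _ _) 1)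
      have hb2 : t * (min lam t - 1) ≤ t * (lam - 1) :=
        Nat.mul_le_mul_left t (Nat.sub_le_sub_right (min_le_left _ _) 1)
      have h1 : F.card ≤ t * (min lam t - 1) + 1 := Nat.le_add_of_sub_le hfle
      exact le_min (le_trans h1 (Nat.add_le_add_right hb1 1))
        (le_trans h1 (Nat.add_le_add_right hb2 1))

  · -- part (b)
    intro hord
    rw [hcard]
    by_contra h1
    push_neg at h1
    obtain ⟨x, hxF, y, hyF, hxy⟩ := Finset.one_lt_card.1 h1
    exact part_b_core hD hsym hlam hAut hsemi hord
      (Finset.mem_filter.1 hxF).2 (Finset.mem_filter.1 hyF).2 hxy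
end
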